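/- arXiv:1907.05939 — 6 statements merged into one kernel-verified Lean document; each statement's English description precedes it below -/
import Mathlib

section
/- Fix constants c0, ρ0, H, R_a > 0 and c_min > 0. Let (c, ρ, γ) and (c', ρ', γ') be two parameter sets (with the same constants), and let ω1, ω2 be two distinct frequencies with ω_j > c0/(2H). If for both ω = ω1 and ω = ω2 one has v_ω(r) = v'_ω(r) for almost every r > 0, then c = c' almost everywhere, γ = γ' almost everywhere, and ρ(r) = ρ'(r) for every r > 0. -/
open MeasureTheory

/-- The radial part of the three-dimensional Laplacian:
`Δ_r f (r) = f''(r) + (2/r) f'(r)`. -/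
noncomputable def radialLaplacian (f : ℝ → ℝ) (r : ℝ) : ℝ :=
  deriv (deriv f) r + (2 / r) * deriv f r

/-- The Schrödinger potential arising from solar parameters `(c, ρ, γ)` at frequency `ω`:
`v_ω(r) = k_ω² − (ω² + 2iωγ(r))/c(r)² + ρ(r)^{1/2} Δ_r(ρ^{-1/2})(r)` with
`k_ω² = ω²/c0² − 1/(4H²)`. -/
noncomputable def solarPotential (c0 H : ℝ) (c ρ γ : ℝ → ℝ) (ω r : ℝ) : ℂ :=
  ((ω ^ 2 / c0 ^ 2 - 1 / (4 * H ^ 2) : ℝ) : ℂ)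
    - ((ω : ℂ) ^ 2 + 2 * Complex.I * (ω : ℂ) * ((γ r : ℝ) : ℂ)) / ((c r : ℝ) : ℂ) ^ 2
    + ((Real.sqrt (ρ r) * radialLaplacian (fun x => (Real.sqrt (ρ x))⁻¹) r : ℝ) : ℂ)

/-!
The imaginary part of `v_ω` is `-2ωγ/c²`, and `Re (v_ω - v'_ω) = ω² (1/c'² - 1/c²) + q - q'` with
`q = ρ^{1/2} Δ_r ρ^{-1/2}`. Its vanishing at two distinct values of `ω²` forces `c = c'` and
`q = q'`; the imaginary part then gives `γ = γ'`. Being continuous, `q` and `q'` agree everywhere,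
so `ρ^{-1/2}` and `ρ'^{-1/2}` both solve the linear radial equation `Δ_r u = q u` on `(0, ∞)`. They
agree above `R_a`, hence everywhere by uniqueness for linear ODEs.
-/

open Set Filter Topology

theorem re_im_eq_of_potential_eq {K ω c c' g g' W W' : ℝ}
    (h : (K : ℂ) - ((ω : ℂ) ^ 2 + 2 * Complex.I * ω * g) / (c : ℂ) ^ 2 + W
       = (K : ℂ) - ((ω : ℂ) ^ 2 + 2 * Complex.I * ω * g') / (c' : ℂ) ^ 2 + W') :
    ω ^ 2 / c ^ 2 - W = ω ^ 2 / c' ^ 2 - W' ∧ ω * g / c ^ 2 = ω * g' / c' ^ 2 := by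
  have hform : ∀ g c W : ℝ, (K : ℂ) - ((ω : ℂ) ^ 2 + 2 * Complex.I * ω * g) / (c : ℂ) ^ 2 + W
      = ((K - ω ^ 2 / c ^ 2 + W : ℝ) : ℂ) - ((2 * (ω * g / c ^ 2) : ℝ) : ℂ) * Complex.I := by
    intro g c W; push_cast; ring
  rw [hform, hform, Complex.ext_iff] at h
  simp only [Complex.sub_re, Complex.sub_im, Complex.ofReal_re, Complex.ofReal_im,
    Complex.re_ofReal_mul, Complex.im_ofReal_mul, Complex.I_re, Complex.I_im] at h
  constructor <;> linarith [h.1, h.2]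

theorem eq_of_potential_eq_of_two_freq {K₁ K₂ ω₁ ω₂ c c' g g' W W' : ℝ}
    (hc : 0 < c) (hc' : 0 < c') (hω₁ : 0 < ω₁) (hω₂ : 0 < ω₂) (hne : ω₁ ≠ ω₂)
    (h₁ : (K₁ : ℂ) - ((ω₁ : ℂ) ^ 2 + 2 * Complex.I * ω₁ * g) / (c : ℂ) ^ 2 + W
       = (K₁ : ℂ) - ((ω₁ : ℂ) ^ 2 + 2 * Complex.I * ω₁ * g') / (c' : ℂ) ^ 2 + W')
    (h₂ : (K₂ : ℂ) - ((ω₂ : ℂ) ^ 2 + 2 * Complex.I * ω₂ * g) / (c : ℂ) ^ 2 + W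
       = (K₂ : ℂ) - ((ω₂ : ℂ) ^ 2 + 2 * Complex.I * ω₂ * g') / (c' : ℂ) ^ 2 + W') :
    c = c' ∧ g = g' ∧ W = W' := by
  obtain ⟨hre₁, him₁⟩ := re_im_eq_of_potential_eq h₁
  obtain ⟨hre₂, -⟩ := re_im_eq_of_potential_eq h₂
  have hslope : (ω₁ ^ 2 - ω₂ ^ 2) * (1 / c ^ 2 - 1 / c' ^ 2) = 0 := by
    linear_combination hre₁ - hre₂
  have hω : ω₁ ^ 2 - ω₂ ^ 2 ≠ 0 := by
    rw [sub_ne_zero]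
    exact fun h => hne ((pow_left_inj₀ hω₁.le hω₂.le two_ne_zero).1 h)
  have hcc' : c = c' := by
    have := sub_eq_zero.1 ((mul_eq_zero.1 hslope).resolve_left hω)
    rwa [one_div, one_div, inv_inj, pow_left_inj₀ hc.le hc'.le two_ne_zero] at this
  subst hcc'
  refine ⟨rfl, ?_, by linarith⟩
  exact mul_left_cancel₀ hω₁.ne' ((div_left_inj' (pow_ne_zero 2 hc.ne')).1 him₁)

theorem eqOn_Icc_of_hasDerivAt_clm {E : Type*} [NormedAddCommGroup E] [NormedSpace ℝ E]
    {A : ℝ → E →L[ℝ] E} {f g : ℝ → E} {a b : ℝ} (hA : ContinuousOn A (Icc a b))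
    (hf : ∀ t ∈ Icc a b, HasDerivAt f (A t (f t)) t)
    (hg : ∀ t ∈ Icc a b, HasDerivAt g (A t (g t)) t) (hb : f b = g b) :
    EqOn f g (Icc a b) := by
  obtain ⟨C, hC⟩ := isCompact_Icc.exists_bound_of_continuousOn hA
  have hlip : ∀ t ∈ Ioc a b, LipschitzOnWith C.toNNReal (A t) univ := fun t ht =>
    ((A t).lipschitz.weaken (by simpa [← NNReal.coe_le_coe] using
      (hC t (Ioc_subset_Icc_self ht)).trans (le_max_left C 0))).lipschitzOnWith
  exact ODE_solution_unique_of_mem_Icc_left hlip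
    (fun t ht => (hf t ht).continuousAt.continuousWithinAt)
    (fun t ht => (hf t (Ioc_subset_Icc_self ht)).hasDerivWithinAt) (fun _ _ => mem_univ _)
    (fun t ht => (hg t ht).continuousAt.continuousWithinAt)
    (fun t ht => (hg t (Ioc_subset_Icc_self ht)).hasDerivWithinAt) (fun _ _ => mem_univ _) hb

open ContinuousLinearMap in
theorem eqOn_Icc_of_hasDerivAt_second_order_linear {P Q u u' w w' : ℝ → ℝ} {a b : ℝ}
    (hP : ContinuousOn P (Icc a b)) (hQ : ContinuousOn Q (Icc a b))
    (hu : ∀ t ∈ Icc a b, HasDerivAt u (u' t) t)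
    (hu' : ∀ t ∈ Icc a b, HasDerivAt u' (P t * u' t + Q t * u t) t)
    (hw : ∀ t ∈ Icc a b, HasDerivAt w (w' t) t)
    (hw' : ∀ t ∈ Icc a b, HasDerivAt w' (P t * w' t + Q t * w t) t)
    (hb : u b = w b) (hb' : u' b = w' b) :
    EqOn u w (Icc a b) := by
  let A : ℝ → ℝ × ℝ →L[ℝ] ℝ × ℝ := fun t =>
    inl ℝ ℝ ℝ ∘L snd ℝ ℝ ℝ + P t • (inr ℝ ℝ ℝ ∘L snd ℝ ℝ ℝ) + Q t • (inr ℝ ℝ ℝ ∘L fst ℝ ℝ ℝ)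
  have hA : ContinuousOn A (Icc a b) := by fun_prop
  have hA_apply : ∀ t x x', A t (x, x') = (x', P t * x' + Q t * x) := by
    intro t x x'; ext <;> simp [A]
  have key := eqOn_Icc_of_hasDerivAt_clm (f := fun t => (u t, u' t))
    (g := fun t => (w t, w' t)) hA
    (fun t ht => by rw [hA_apply]; exact (hu t ht).prodMk (hu' t ht))
    (fun t ht => by rw [hA_apply]; exact (hw t ht).prodMk (hw' t ht)) (by simp [hb, hb'])
  exact fun t ht => congrArg Prod.fst (key ht)

theorem ContDiffOn.hasDerivAt_deriv_radialLaplacian {f : ℝ → ℝ} (hf : ContDiffOn ℝ 2 f (Ioi 0))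
    {t : ℝ} (ht : 0 < t) :
    HasDerivAt f (deriv f t) t ∧
      HasDerivAt (deriv f) (radialLaplacian f t - 2 / t * deriv f t) t := by
  have hf' : ContDiffOn ℝ 1 (deriv f) (Ioi 0) := hf.deriv_of_isOpen isOpen_Ioi (by norm_num)
  refine ⟨(hf.differentiableOn two_ne_zero t ht).differentiableAt (Ioi_mem_nhds ht)
    |>.hasDerivAt, ?_⟩
  rw [radialLaplacian, add_sub_cancel_right]
  exact ((hf'.differentiableOn one_ne_zero t ht).differentiableAt (Ioi_mem_nhds ht)).hasDerivAt

theorem ContDiffOn.continuousOn_radialLaplacian {f : ℝ → ℝ} (hf : ContDiffOn ℝ 2 f (Ioi 0)) :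
    ContinuousOn (radialLaplacian f) (Ioi 0) := by
  have hf' : ContDiffOn ℝ 1 (deriv f) (Ioi 0) := hf.deriv_of_isOpen isOpen_Ioi (by norm_num)
  exact (hf'.continuousOn_deriv_of_isOpen isOpen_Ioi le_rfl).add
    ((continuousOn_const.div continuousOn_id fun r hr => (mem_Ioi.1 hr).ne').mul hf'.continuousOn)

theorem eqOn_Ioc_of_radialLaplacian_eq_mul {f g W : ℝ → ℝ} {b : ℝ}
    (hf : ContDiffOn ℝ 2 f (Ioi 0)) (hg : ContDiffOn ℝ 2 g (Ioi 0)) (hW : ContinuousOn W (Ioi 0))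
    (hfW : ∀ r > 0, radialLaplacian f r = W r * f r)
    (hgW : ∀ r > 0, radialLaplacian g r = W r * g r) (hb : f =ᶠ[𝓝 b] g) :
    EqOn f g (Ioc 0 b) := by
  intro a ha
  have hpos : Icc a b ⊆ Ioi 0 := fun t ht => ha.1.trans_le ht.1
  have hode : ∀ {h : ℝ → ℝ}, ContDiffOn ℝ 2 h (Ioi 0) →
      (∀ r > 0, radialLaplacian h r = W r * h r) →
      ∀ t ∈ Icc a b, HasDerivAt (deriv h) (-(2 / t) * deriv h t + W t * h t) t := by
    intro h hh hhW t ht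
    exact (hh.hasDerivAt_deriv_radialLaplacian (hpos ht)).2.congr_deriv
      (by rw [hhW t (hpos ht)]; ring)
  refine eqOn_Icc_of_hasDerivAt_second_order_linear (P := fun t => -(2 / t))
    ((continuousOn_const.div continuousOn_id fun t ht => (hpos ht).ne').neg) (hW.mono hpos)
    (fun t ht => (hf.hasDerivAt_deriv_radialLaplacian (hpos ht)).1) (hode hf hfW)
    (fun t ht => (hg.hasDerivAt_deriv_radialLaplacian (hpos ht)).1) (hode hg hgW)
    hb.eq_of_nhds hb.deriv_eq ⟨le_rfl, ha.2⟩

noncomputable def densityPotential (ρ : ℝ → ℝ) (r : ℝ) : ℝ :=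
  Real.sqrt (ρ r) * radialLaplacian (fun x => (Real.sqrt (ρ x))⁻¹) r

theorem contDiffOn_inv_sqrt {ρ : ℝ → ℝ} {n : WithTop ℕ∞} {s : Set ℝ} (hρ : ContDiffOn ℝ n ρ s)
    (hρ_pos : ∀ r ∈ s, 0 < ρ r) : ContDiffOn ℝ n (fun x => (Real.sqrt (ρ x))⁻¹) s :=
  (hρ.sqrt fun x hx => (hρ_pos x hx).ne').inv fun x hx => (Real.sqrt_pos.2 (hρ_pos x hx)).ne'

theorem continuousOn_densityPotential {ρ : ℝ → ℝ} (hρ : ContDiffOn ℝ 2 ρ (Ioi 0))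
    (hρ_pos : ∀ r > 0, 0 < ρ r) : ContinuousOn (densityPotential ρ) (Ioi 0) :=
  (Real.continuous_sqrt.comp_continuousOn hρ.continuousOn).mul
    (contDiffOn_inv_sqrt hρ hρ_pos).continuousOn_radialLaplacian

theorem radialLaplacian_inv_sqrt {ρ : ℝ → ℝ} {r : ℝ} (hr : 0 < ρ r) :
    radialLaplacian (fun x => (Real.sqrt (ρ x))⁻¹) r =
      densityPotential ρ r * (Real.sqrt (ρ r))⁻¹ := by
  rw [densityPotential, mul_right_comm, mul_inv_cancel₀ (Real.sqrt_pos.2 hr).ne', one_mul]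

theorem eqOn_of_densityPotential_eqOn {ρ ρ' : ℝ → ℝ} (hρ : ContDiffOn ℝ 2 ρ (Ioi 0))
    (hρ' : ContDiffOn ℝ 2 ρ' (Ioi 0)) (hρ_pos : ∀ r > 0, 0 < ρ r) (hρ'_pos : ∀ r > 0, 0 < ρ' r)
    (heq : EqOn (densityPotential ρ) (densityPotential ρ') (Ioi 0)) (hatTop : ρ =ᶠ[atTop] ρ') :
    EqOn ρ ρ' (Ioi 0) := by
  intro r hr
  obtain ⟨R, hR⟩ := eventually_atTop.1 hatTop
  have hnear :
      (fun x => (Real.sqrt (ρ x))⁻¹) =ᶠ[𝓝 (max R r + 1)] fun x => (Real.sqrt (ρ' x))⁻¹ := by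
    filter_upwards [Ioi_mem_nhds (show R < max R r + 1 by linarith [le_max_left R r])] with x hx
    rw [hR x hx.le]
  have hinv := eqOn_Ioc_of_radialLaplacian_eq_mul (contDiffOn_inv_sqrt hρ hρ_pos)
    (contDiffOn_inv_sqrt hρ' hρ'_pos) (continuousOn_densityPotential hρ hρ_pos)
    (fun t ht => radialLaplacian_inv_sqrt (hρ_pos t ht))
    (fun t ht => (heq ht).symm ▸ radialLaplacian_inv_sqrt (hρ'_pos t ht)) hnear
    ⟨hr, by linarith [le_max_right R r]⟩
  rwa [inv_inj, Real.sqrt_inj (hρ_pos r hr).le (hρ'_pos r hr).le] at hinv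

theorem stmt_2_general (c0 ρ0 H Ra cmin : ℝ)
    (hc0 : 0 < c0) (hH : 0 < H) (hcmin : 0 < cmin)
    (c ρ γ c' ρ' γ' : ℝ → ℝ)
    -- first parameter set
    (hc_min : ∀ᵐ r ∂(volume.restrict (Set.Ioi (0 : ℝ))), cmin ≤ c r)
    (hρ_pos : ∀ r > (0 : ℝ), 0 < ρ r) (hρ_C2 : ContDiffOn ℝ 2 ρ (Set.Ioi 0))
    (hρ_atm : ∀ r ≥ Ra, ρ r = ρ0 * Real.exp (-(r - Ra) / H))
    -- second parameter set
    (hc'_min : ∀ᵐ r ∂(volume.restrict (Set.Ioi (0 : ℝ))), cmin ≤ c' r)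
    (hρ'_pos : ∀ r > (0 : ℝ), 0 < ρ' r) (hρ'_C2 : ContDiffOn ℝ 2 ρ' (Set.Ioi 0))
    (hρ'_atm : ∀ r ≥ Ra, ρ' r = ρ0 * Real.exp (-(r - Ra) / H))
    -- two distinct frequencies above the cutoff
    (ω1 ω2 : ℝ) (hω1 : ω1 > c0 / (2 * H)) (hω2 : ω2 > c0 / (2 * H)) (hωne : ω1 ≠ ω2)
    -- equality of the potentials at both frequencies
    (heq1 : ∀ᵐ r ∂(volume.restrict (Set.Ioi (0 : ℝ))),
      solarPotential c0 H c ρ γ ω1 r = solarPotential c0 H c' ρ' γ' ω1 r)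
    (heq2 : ∀ᵐ r ∂(volume.restrict (Set.Ioi (0 : ℝ))),
      solarPotential c0 H c ρ γ ω2 r = solarPotential c0 H c' ρ' γ' ω2 r) :
    (∀ᵐ r ∂(volume.restrict (Set.Ioi (0 : ℝ))), c r = c' r) ∧
    (∀ᵐ r ∂(volume.restrict (Set.Ioi (0 : ℝ))), γ r = γ' r) ∧
    (∀ r > (0 : ℝ), ρ r = ρ' r) := by
  have hω₁ : 0 < ω1 := (by positivity : 0 < c0 / (2 * H)).trans hω1
  have hω₂ : 0 < ω2 := (by positivity : 0 < c0 / (2 * H)).trans hω2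
  have hae : ∀ᵐ r ∂(volume.restrict (Ioi (0 : ℝ))),
      c r = c' r ∧ γ r = γ' r ∧ densityPotential ρ r = densityPotential ρ' r := by
    filter_upwards [heq1, heq2, hc_min, hc'_min] with r h₁ h₂ hcr hc'r
    exact eq_of_potential_eq_of_two_freq (hcmin.trans_le hcr) (hcmin.trans_le hc'r) hω₁ hω₂
      hωne h₁ h₂
  refine ⟨hae.mono fun _ h => h.1, hae.mono fun _ h => h.2.1, fun r hr => ?_⟩
  refine eqOn_of_densityPotential_eqOn hρ_C2 hρ'_C2 hρ_pos hρ'_pos ?_ ?_ hr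
  · exact Measure.eqOn_open_of_ae_eq (hae.mono fun _ h => h.2.2) isOpen_Ioi
      (continuousOn_densityPotential hρ_C2 hρ_pos) (continuousOn_densityPotential hρ'_C2 hρ'_pos)
  · exact eventually_atTop.2 ⟨Ra, fun s hs => (hρ_atm s hs).trans (hρ'_atm s hs).symm⟩

/-- Two frequencies above the acoustic cutoff determine sound speed, density and
attenuation from equality of the Schrödinger potentials (Corollary 2.4). -/
theorem stmt_2 (c0 ρ0 H Ra cmin : ℝ)
    (hc0 : 0 < c0) (hρ0 : 0 < ρ0) (hH : 0 < H) (hRa : 0 < Ra) (hcmin : 0 < cmin)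
    (c ρ γ c' ρ' γ' : ℝ → ℝ)
    -- first parameter set
    (hc_meas : Measurable c)
    (hc_min : ∀ᵐ r ∂(volume.restrict (Set.Ioi (0 : ℝ))), cmin ≤ c r)
    (hγ_meas : Measurable γ) (hγ_bdd : ∃ M, ∀ r, |γ r| ≤ M)
    (hρ_pos : ∀ r > (0 : ℝ), 0 < ρ r) (hρ_C2 : ContDiffOn ℝ 2 ρ (Set.Ioi 0))
    (hc_atm : ∀ r ≥ Ra, c r = c0)
    (hρ_atm : ∀ r ≥ Ra, ρ r = ρ0 * Real.exp (-(r - Ra) / H))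
    (hγ_atm : ∀ r ≥ Ra, γ r = 0)
    -- second parameter set
    (hc'_meas : Measurable c')
    (hc'_min : ∀ᵐ r ∂(volume.restrict (Set.Ioi (0 : ℝ))), cmin ≤ c' r)
    (hγ'_meas : Measurable γ') (hγ'_bdd : ∃ M, ∀ r, |γ' r| ≤ M)
    (hρ'_pos : ∀ r > (0 : ℝ), 0 < ρ' r) (hρ'_C2 : ContDiffOn ℝ 2 ρ' (Set.Ioi 0))
    (hc'_atm : ∀ r ≥ Ra, c' r = c0)
    (hρ'_atm : ∀ r ≥ Ra, ρ' r = ρ0 * Real.exp (-(r - Ra) / H))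
    (hγ'_atm : ∀ r ≥ Ra, γ' r = 0)
    -- two distinct frequencies above the cutoff
    (ω1 ω2 : ℝ) (hω1 : ω1 > c0 / (2 * H)) (hω2 : ω2 > c0 / (2 * H)) (hωne : ω1 ≠ ω2)
    -- equality of the potentials at both frequencies
    (heq1 : ∀ᵐ r ∂(volume.restrict (Set.Ioi (0 : ℝ))),
      solarPotential c0 H c ρ γ ω1 r = solarPotential c0 H c' ρ' γ' ω1 r)
    (heq2 : ∀ᵐ r ∂(volume.restrict (Set.Ioi (0 : ℝ))),
      solarPotential c0 H c ρ γ ω2 r = solarPotential c0 H c' ρ' γ' ω2 r) :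
    (∀ᵐ r ∂(volume.restrict (Set.Ioi (0 : ℝ))), c r = c' r) ∧
    (∀ᵐ r ∂(volume.restrict (Set.Ioi (0 : ℝ))), γ r = γ' r) ∧
    (∀ r > (0 : ℝ), ρ r = ρ' r) :=
  stmt_2_general c0 ρ0 H Ra cmin hc0 hH hcmin c ρ γ c' ρ' γ' hc_min hρ_pos hρ_C2 hρ_atm hc'_min
    hρ'_pos hρ'_C2 hρ'_atm ω1 ω2 hω1 hω2 hωne heq1 heq2
end

section
/- Let k > 0, η ∈ ℝ, let ℓ ≥ 0 be an integer, and let σ_ℓ, σ_{ℓ+1} ∈ ℝ satisfy σ_{ℓ+1} − σ_ℓ = arg(ℓ+1+iη). For j ∈ {ℓ, ℓ+1} define θ_j(r) = k·r − η·log(2kr) − jπ/2 + σ_j. Let H_ℓ, H_{ℓ+1} : (0,∞) → ℂ be differentiable functions such that H_j(r) = exp(iθ_j(r)) + O(1/r) as r → +∞ for j = ℓ, ℓ+1, and such that for all r > 0 the recurrence H_ℓ'(r) = ((ℓ+1)/r + k·η/(ℓ+1))·H_ℓ(r) − k·√(1 + η²/(ℓ+1)²)·H_{ℓ+1}(r)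 holds. Then H_ℓ'(r) = ik·H_ℓ(r) + O(1/r) as r → +∞. -/
open Filter Asymptotics

/-! The phase of `H_{ℓ+1}` exceeds that of `H_ℓ` by `arg z - π/2` with `z = ℓ + 1 + iη`, and
`k √(1 + η²/(ℓ+1)²) = k‖z‖/(ℓ+1)`. Hence the constant part `kη/(ℓ+1) - ik` of the recurrence
coefficient of `H_ℓ` is exactly cancelled by the leading term of `H_{ℓ+1}`, while the term
`(ℓ+1)/r · H_ℓ` and the `O(1/r)` errors of both asymptotics remain `O(1/r)`. -/

namespace Complex

theorem norm_mul_exp_I_mul_arg_sub_pi_div_two (z : ℂ) :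
    (‖z‖ : ℂ) * exp (I * ((arg z - Real.pi / 2 : ℝ) : ℂ)) = -I * z := by
  have hquarter : exp (((-(Real.pi / 2) : ℝ) : ℂ) * I) = -I := by
    rw [exp_mul_I, ← ofReal_cos, ← ofReal_sin]
    simp
  rw [show I * ((arg z - Real.pi / 2 : ℝ) : ℂ) = arg z * I + ((-(Real.pi / 2) : ℝ) : ℂ) * I by
    push_cast; ring, exp_add, hquarter, ← mul_assoc, norm_mul_exp_arg_mul_I, mul_comm]

theorem sqrt_one_add_sq_div_sq {a : ℝ} (ha : 0 < a) (η : ℝ) :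
    Real.sqrt (1 + η ^ 2 / a ^ 2) = ‖(a : ℂ) + I * η‖ / a := by
  rw [norm_def, normSq_apply]
  rw [show 1 + η ^ 2 / a ^ 2 = (a ^ 2 + η ^ 2) / a ^ 2 by field_simp,
    Real.sqrt_div' _ (by positivity), Real.sqrt_sq ha.le]
  simp [sq]

theorem mul_sqrt_mul_exp_I_mul_arg_sub_pi_div_two {a : ℝ} (ha : 0 < a) (k η : ℝ) :
    ((k * Real.sqrt (1 + η ^ 2 / a ^ 2) : ℝ) : ℂ) *
        exp (I * ((arg ((a : ℂ) + I * η) - Real.pi / 2 : ℝ) : ℂ)) =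
      ((k * η / a : ℝ) : ℂ) - I * k := by
  have ha' : (a : ℂ) ≠ 0 := by exact_mod_cast ha.ne'
  rw [sqrt_one_add_sq_div_sq ha]
  linear_combination (norm := skip)
    (k / a : ℂ) * norm_mul_exp_I_mul_arg_sub_pi_div_two ((a : ℂ) + I * η)
  push_cast
  field_simp
  ring_nf
  rw [I_sq]
  ring

end Complex

theorem Asymptotics.IsBigO.isBigO_one_of_sub_isBigO_one_div {E : Type*} [SeminormedAddCommGroup E]
    {f g : ℝ → E}
    (hfg : (fun r => f r - g r) =O[atTop] (fun r : ℝ => 1 / r))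
    (hg : g =O[atTop] (fun _ => (1 : ℝ))) : f =O[atTop] (fun _ => (1 : ℝ)) := by
  have hinv : (fun r : ℝ => 1 / r) =O[atTop] (fun _ => (1 : ℝ)) :=
    (tendsto_const_nhds.div_atTop tendsto_id).isBigO_one ℝ
  simpa using (hfg.trans hinv).add hg

theorem stmt_5_general (k η : ℝ) (ℓ : ℕ) (σl σl1 : ℝ)
    (hσ : σl1 - σl = Complex.arg ((ℓ : ℂ) + 1 + Complex.I * (η : ℂ)))
    (Hl Hl1 : ℝ → ℂ)
    (hasym_l : (fun r : ℝ => Hl r - Complex.exp (Complex.I *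
        ((k * r - η * Real.log (2 * k * r) - (ℓ : ℝ) * Real.pi / 2 + σl : ℝ) : ℂ)))
      =O[atTop] (fun r : ℝ => 1 / r))
    (hasym_l1 : (fun r : ℝ => Hl1 r - Complex.exp (Complex.I *
        ((k * r - η * Real.log (2 * k * r) - ((ℓ : ℝ) + 1) * Real.pi / 2 + σl1 : ℝ) : ℂ)))
      =O[atTop] (fun r : ℝ => 1 / r))
    (hrec : ∀ r > (0 : ℝ),
      deriv Hl r = ((((ℓ : ℝ) + 1) / r + k * η / ((ℓ : ℝ) + 1) : ℝ) : ℂ) * Hl r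
        - ((k * Real.sqrt (1 + η ^ 2 / ((ℓ : ℝ) + 1) ^ 2) : ℝ) : ℂ) * Hl1 r) :
    (fun r : ℝ => deriv Hl r - Complex.I * (k : ℂ) * Hl r) =O[atTop] (fun r : ℝ => 1 / r) := by
  have ha : (0 : ℝ) < (ℓ : ℝ) + 1 := by positivity
  set e : ℝ → ℂ := fun r => Complex.exp (Complex.I *
    ((k * r - η * Real.log (2 * k * r) - (ℓ : ℝ) * Real.pi / 2 + σl : ℝ) : ℂ))
  set u : ℂ := Complex.exp (Complex.I *
    ((Complex.arg (((ℓ : ℝ) + 1 : ℝ) + Complex.I * η) - Real.pi / 2 : ℝ) : ℂ))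
  set c : ℂ := ((k * η / ((ℓ : ℝ) + 1) : ℝ) : ℂ) - Complex.I * k
  set d : ℂ := ((k * Real.sqrt (1 + η ^ 2 / ((ℓ : ℝ) + 1) ^ 2) : ℝ) : ℂ)
  have hphase : ∀ r : ℝ, Complex.exp (Complex.I *
      ((k * r - η * Real.log (2 * k * r) - ((ℓ : ℝ) + 1) * Real.pi / 2 + σl1 : ℝ) : ℂ)) =
      e r * u := by
    have hz : (((ℓ : ℝ) + 1 : ℝ) : ℂ) + Complex.I * η = (ℓ : ℂ) + 1 + Complex.I * η := by
      push_cast; ring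
    intro r
    rw [← Complex.exp_add, ← mul_add, ← Complex.ofReal_add, hz, ← hσ]
    ring_nf
  simp only [hphase] at hasym_l1
  have hcancel : d * u = c := Complex.mul_sqrt_mul_exp_I_mul_arg_sub_pi_div_two ha k η
  have he : e =O[atTop] (fun _ => (1 : ℝ)) := .of_bound 1 (.of_forall fun r => by
    simp only [e, Complex.norm_exp_I_mul_ofReal, norm_one, mul_one, le_refl])
  have hHl : Hl =O[atTop] (fun _ => (1 : ℝ)) := hasym_l.isBigO_one_of_sub_isBigO_one_div he
  have hdecay : (fun r : ℝ => ((((ℓ : ℝ) + 1) / r : ℝ) : ℂ)) =O[atTop] (fun r : ℝ => 1 / r) :=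
    .of_bound ((ℓ : ℝ) + 1) (.of_forall fun r => by
      rw [Complex.norm_real, div_eq_mul_one_div, norm_mul, Real.norm_of_nonneg ha.le])
  -- `H_ℓ' - ikH_ℓ = (ℓ+1)/r · H_ℓ + c (H_ℓ - e) - d (H_{ℓ+1} - e u) + (c - d u) e`
  have hsum := (((hdecay.mul hHl).congr_right fun r => mul_one _).add
    (hasym_l.const_mul_left c)).sub (hasym_l1.const_mul_left d)
  refine hsum.congr' ?_ .rfl
  filter_upwards [eventually_gt_atTop 0] with r hr
  rw [hrec r hr]
  linear_combination (norm := (simp only [e, c]; push_cast; ring)) e r * hcancel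

/-- Derivative asymptotics of the Coulomb wave functions from Powell's recurrence:
if `H_j(r) = exp(iθ_j(r)) + O(1/r)` for `j = ℓ, ℓ+1`, where
`θ_j(r) = kr − η log(2kr) − jπ/2 + σ_j` and `σ_{ℓ+1} − σ_ℓ = arg(ℓ+1+iη)`, and
`H_ℓ' = ((ℓ+1)/r + kη/(ℓ+1)) H_ℓ − k √(1+η²/(ℓ+1)²) H_{ℓ+1}`, then
`H_ℓ'(r) = ik H_ℓ(r) + O(1/r)` as `r → +∞`. -/
theorem stmt_5 (k η : ℝ) (hk : 0 < k) (ℓ : ℕ) (σl σl1 : ℝ)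
    (hσ : σl1 - σl = Complex.arg ((ℓ : ℂ) + 1 + Complex.I * (η : ℂ)))
    (Hl Hl1 : ℝ → ℂ)
    (hHld : ∀ r > (0 : ℝ), DifferentiableAt ℝ Hl r)
    (hHl1d : ∀ r > (0 : ℝ), DifferentiableAt ℝ Hl1 r)
    (hasym_l : (fun r : ℝ => Hl r - Complex.exp (Complex.I *
        ((k * r - η * Real.log (2 * k * r) - (ℓ : ℝ) * Real.pi / 2 + σl : ℝ) : ℂ)))
      =O[atTop] (fun r : ℝ => 1 / r))
    (hasym_l1 : (fun r : ℝ => Hl1 r - Complex.exp (Complex.I *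
        ((k * r - η * Real.log (2 * k * r) - ((ℓ : ℝ) + 1) * Real.pi / 2 + σl1 : ℝ) : ℂ)))
      =O[atTop] (fun r : ℝ => 1 / r))
    (hrec : ∀ r > (0 : ℝ),
      deriv Hl r = ((((ℓ : ℝ) + 1) / r + k * η / ((ℓ : ℝ) + 1) : ℝ) : ℂ) * Hl r
        - ((k * Real.sqrt (1 + η ^ 2 / ((ℓ : ℝ) + 1) ^ 2) : ℝ) : ℂ) * Hl1 r) :
    (fun r : ℝ => deriv Hl r - Complex.I * (k : ℂ) * Hl r) =O[atTop] (fun r : ℝ => 1 / r) :=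
  stmt_5_general k η ℓ σl σl1 hσ Hl Hl1 hasym_l hasym_l1 hrec
end

section
/- Let k > 0 and let q : (0,∞) → ℂ be continuous. Let φ, ψ be twice continuously differentiable solutions of −u'' + q·u = k²·u on (0,∞) whose constant Wronskian W = [φ,ψ] is nonzero, and define G(r,r') = −φ(min(r,r'))·ψ(max(r,r'))/W for r, r' > 0. Then for all 0 < ε < r1 ≤ r2 < R, writing u = conj(G(·,r1)) and w = G(·,r2): [u,w](R) − [u,w](ε) − 2i·∫_ε^R Im q(r)·conj(G(r,r1))·G(r,r2) dr = G(r1,r2) − conj(G(r2,r1)), where the Wronskians [u,w](t) = u(t)·w'(t) − u'(t)·w(t) at t = ε, R are well defined since ε, R ∉ {r1, r2}. -/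
/-!
On each of `[ε, r₁]`, `[r₁, r₂]`, `[r₂, R]` the functions `conj G(·, r₁)` and `G(·, r₂)` are
multiples of (conjugated) solutions: `G(·, s)` is a multiple of `φ` left of `s` and of `ψ` right
of it. For solutions `u` of `-u'' + p u = E u` and `w` of `-w'' + q w = E w` the Lagrange identity
`[u, w]' = (q - p) u w` holds, and with `p = conj q` (and `E = k²` real) the right-hand side is
`2i Im q · u w`. So the integral telescopes to `[u, w](R) - [u, w](ε)` plus the jumps of the
Wronskian at `r₁` and `r₂`. As `G(·, s)` is continuous and its derivative jumps by `-1` at `s`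
(this is `[φ, ψ] = W`), these jumps are `-G(r₁, r₂)` and `conj G(r₂, r₁)`.
-/

/-- The Wronskian `[f,g](r) = f(r) g'(r) − f'(r) g(r)`. -/
noncomputable def wronskian (f g : ℝ → ℂ) (r : ℝ) : ℂ :=
  f r * deriv g r - deriv f r * g r

open Set Filter Topology ComplexConjugate

lemma intervalIntegrable_of_continuousOn_Ioi_zero {f : ℝ → ℂ} (hf : ContinuousOn f (Ioi 0))
    {a b : ℝ} (ha : 0 < a) (hb : 0 < b) : IntervalIntegrable f MeasureTheory.volume a b :=
  (hf.mono fun _ hx => (lt_min ha hb).trans_le hx.1).intervalIntegrable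

lemma deriv_conj (f : ℝ → ℂ) (x : ℝ) : deriv (fun y => conj (f y)) x = conj (deriv f x) :=
  deriv.star

lemma two_mul_I_mul_integral_im_mul (q f g : ℝ → ℂ) (a b : ℝ) :
    2 * Complex.I * ∫ r in a..b, ((q r).im : ℂ) * f r * g r =
      ∫ r in a..b, (q r - conj (q r)) * (f r * g r) := by
  rw [← intervalIntegral.integral_const_mul]
  refine intervalIntegral.integral_congr fun r _ => ?_
  simp only [Complex.sub_conj]
  push_cast
  ring

lemma Filter.EventuallyEq.wronskian_eq {u u' w w' : ℝ → ℂ} {x : ℝ} (hu : u =ᶠ[𝓝 x] u')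
    (hw : w =ᶠ[𝓝 x] w') : wronskian u w x = wronskian u' w' x := by
  simp only [wronskian, hu.eq_of_nhds, hw.eq_of_nhds, hu.deriv_eq, hw.deriv_eq]

section WronskianJump

variable {u u₁ u₂ w w₁ w₂ : ℝ → ℂ} {x : ℝ}

lemma wronskian_sub_wronskian_of_jump_left (hval : u₁ x = u₂ x)
    (hjump : deriv u₁ x - deriv u₂ x = 1) :
    wronskian u₁ w x - wronskian u₂ w x = -w x := by
  simp only [wronskian]
  linear_combination deriv w x * hval - w x * hjump

lemma wronskian_sub_wronskian_of_jump_right (hval : w₁ x = w₂ x)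
    (hjump : deriv w₁ x - deriv w₂ x = 1) :
    wronskian u w₁ x - wronskian u w₂ x = u x := by
  simp only [wronskian]
  linear_combination u x * hjump - deriv u x * hval

end WronskianJump

def IsRadialSolution (q : ℝ → ℂ) (E : ℂ) (u : ℝ → ℂ) : Prop :=
  ∀ r > (0 : ℝ), DifferentiableAt ℝ u r ∧ DifferentiableAt ℝ (deriv u) r ∧
    -deriv (deriv u) r + q r * u r = E * u r

namespace IsRadialSolution

variable {p q : ℝ → ℂ} {E : ℂ} {u w : ℝ → ℂ}

lemma continuousOn (hu : IsRadialSolution q E u) : ContinuousOn u (Ioi 0) :=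
  fun r hr => (hu r hr).1.continuousAt.continuousWithinAt

lemma const_mul (hu : IsRadialSolution q E u) (c : ℂ) :
    IsRadialSolution q E fun r => c * u r := by
  intro r hr
  obtain ⟨hd, hd2, heq⟩ := hu r hr
  simp only [deriv_const_mul_field']
  exact ⟨hd.const_mul c, hd2.const_mul c, by linear_combination c * heq⟩

lemma star (hu : IsRadialSolution q E u) :
    IsRadialSolution (fun r => conj (q r)) (conj E) fun r => conj (u r) := by
  intro r hr
  obtain ⟨hd, hd2, heq⟩ := hu r hr
  simp only [funext (deriv_conj _)]
  refine ⟨hd.star, hd2.star, ?_⟩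
  simpa using congrArg conj heq

lemma hasDerivAt_wronskian (hu : IsRadialSolution p E u) (hw : IsRadialSolution q E w) {r : ℝ}
    (hr : 0 < r) : HasDerivAt (wronskian u w) ((q r - p r) * (u r * w r)) r := by
  obtain ⟨hud, hud2, hueq⟩ := hu r hr
  obtain ⟨hwd, hwd2, hweq⟩ := hw r hr
  exact ((hud.hasDerivAt.mul hwd2.hasDerivAt).sub (hud2.hasDerivAt.mul hwd.hasDerivAt)).congr_deriv
    (by linear_combination w r * hueq - u r * hweq)

lemma integral_eq_wronskian_sub_of_eqOn (hp : ContinuousOn p (Ioi 0))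
    (hq : ContinuousOn q (Ioi 0)) (hu : IsRadialSolution p E u) (hw : IsRadialSolution q E w)
    {f g : ℝ → ℂ} {a b : ℝ} (ha : 0 < a) (hb : 0 < b) (hf : EqOn f u (uIcc a b))
    (hg : EqOn g w (uIcc a b)) :
    ∫ r in a..b, (q r - p r) * (f r * g r) = wronskian u w b - wronskian u w a := by
  rw [intervalIntegral.integral_congr (g := fun r => (q r - p r) * (u r * w r))
    fun r hr => by simp only [hf hr, hg hr]]
  refine intervalIntegral.integral_eq_sub_of_hasDerivAt
    (fun r hr => hu.hasDerivAt_wronskian hw ((lt_min ha hb).trans_le hr.1))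
    (intervalIntegrable_of_continuousOn_Ioi_zero ?_ ha hb)
  exact (hq.sub hp).mul (hu.continuousOn.mul hw.continuousOn)

end IsRadialSolution

noncomputable def radialGreen (φ ψ : ℝ → ℂ) (W : ℂ) (r s : ℝ) : ℂ :=
  -(φ (min r s) * ψ (max r s)) / W

noncomputable def greenLeft (φ ψ : ℝ → ℂ) (W : ℂ) (s : ℝ) : ℝ → ℂ :=
  fun r => -ψ s / W * φ r

noncomputable def greenRight (φ ψ : ℝ → ℂ) (W : ℂ) (s : ℝ) : ℝ → ℂ :=
  fun r => -φ s / W * ψ r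

section RadialGreen

variable {φ ψ : ℝ → ℂ} {W : ℂ} {r s : ℝ}

lemma radialGreen_of_le (h : r ≤ s) : radialGreen φ ψ W r s = greenLeft φ ψ W s r := by
  rw [radialGreen, greenLeft, min_eq_left h, max_eq_right h]
  ring

lemma radialGreen_of_ge (h : s ≤ r) : radialGreen φ ψ W r s = greenRight φ ψ W s r := by
  rw [radialGreen, greenRight, min_eq_right h, max_eq_left h]
  ring

lemma radialGreen_eventuallyEq_of_lt (h : r < s) :
    (radialGreen φ ψ W · s) =ᶠ[𝓝 r] greenLeft φ ψ W s :=
  (eventually_le_nhds h).mono fun _ hx => radialGreen_of_le hx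

lemma radialGreen_eventuallyEq_of_gt (h : s < r) :
    (radialGreen φ ψ W · s) =ᶠ[𝓝 r] greenRight φ ψ W s :=
  (eventually_ge_nhds h).mono fun _ hx => radialGreen_of_ge hx

lemma greenLeft_self : greenLeft φ ψ W s s = greenRight φ ψ W s s :=
  (radialGreen_of_le le_rfl).symm.trans (radialGreen_of_ge le_rfl)

lemma deriv_greenLeft_sub_deriv_greenRight (hW : wronskian φ ψ s = W) (hW0 : W ≠ 0) :
    deriv (greenLeft φ ψ W s) s - deriv (greenRight φ ψ W s) s = 1 := by
  unfold greenLeft greenRight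
  rw [deriv_const_mul_field, deriv_const_mul_field]
  rw [wronskian] at hW
  field_simp
  linear_combination hW

lemma continuousOn_radialGreen (hφ : ContinuousOn φ (Ioi 0)) (hψ : ContinuousOn ψ (Ioi 0))
    (hs : 0 < s) : ContinuousOn (radialGreen φ ψ W · s) (Ioi 0) :=
  ((hφ.comp (continuous_id.min continuous_const).continuousOn fun _ hx => lt_min hx hs).mul
    (hψ.comp (continuous_id.max continuous_const).continuousOn
      fun _ _ => hs.trans_le (le_max_right _ _))).neg.div_const W

end RadialGreen

section GreenIdentity

variable {q φ ψ : ℝ → ℂ} {E W : ℂ} {s x : ℝ}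

lemma wronskian_conj_radialGreen_of_lt {r₁ r₂ : ℝ} (h₁ : x < r₁) (h₂ : x < r₂) :
    wronskian (fun r => conj (radialGreen φ ψ W r r₁)) (radialGreen φ ψ W · r₂) x =
      wronskian (fun r => conj (greenLeft φ ψ W r₁ r)) (greenLeft φ ψ W r₂) x :=
  ((radialGreen_eventuallyEq_of_lt h₁).fun_comp conj).wronskian_eq
    (radialGreen_eventuallyEq_of_lt h₂)

lemma wronskian_conj_radialGreen_of_gt {r₁ r₂ : ℝ} (h₁ : r₁ < x) (h₂ : r₂ < x) :
    wronskian (fun r => conj (radialGreen φ ψ W r r₁)) (radialGreen φ ψ W · r₂) x =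
      wronskian (fun r => conj (greenRight φ ψ W r₁ r)) (greenRight φ ψ W r₂) x :=
  ((radialGreen_eventuallyEq_of_gt h₁).fun_comp conj).wronskian_eq
    (radialGreen_eventuallyEq_of_gt h₂)

lemma wronskian_conj_greenLeft_sub_wronskian_conj_greenRight (w : ℝ → ℂ)
    (hW : wronskian φ ψ s = W) (hW0 : W ≠ 0) :
    wronskian (fun r => conj (greenLeft φ ψ W s r)) w s
      - wronskian (fun r => conj (greenRight φ ψ W s r)) w s = -w s :=
  wronskian_sub_wronskian_of_jump_left (by simp only [greenLeft_self]) (by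
    rw [deriv_conj, deriv_conj, ← map_sub, deriv_greenLeft_sub_deriv_greenRight hW hW0, map_one])

lemma wronskian_greenLeft_sub_wronskian_greenRight (u : ℝ → ℂ)
    (hW : wronskian φ ψ s = W) (hW0 : W ≠ 0) :
    wronskian u (greenLeft φ ψ W s) s - wronskian u (greenRight φ ψ W s) s = u s :=
  wronskian_sub_wronskian_of_jump_right greenLeft_self
    (deriv_greenLeft_sub_deriv_greenRight hW hW0)

lemma integral_conj_radialGreen_mul_radialGreen (hq : ContinuousOn q (Ioi 0))
    (hφ : IsRadialSolution q E φ) (hψ : IsRadialSolution q E ψ) (hE : conj E = E)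
    {ε r₁ r₂ R : ℝ} (hε : 0 < ε) (hε₁ : ε ≤ r₁) (h₁₂ : r₁ ≤ r₂) (h₂R : r₂ ≤ R) :
    ∫ r in ε..R, (q r - conj (q r)) * (conj (radialGreen φ ψ W r r₁) * radialGreen φ ψ W r r₂) =
      (wronskian (fun r => conj (greenLeft φ ψ W r₁ r)) (greenLeft φ ψ W r₂) r₁
          - wronskian (fun r => conj (greenLeft φ ψ W r₁ r)) (greenLeft φ ψ W r₂) ε)
        + (wronskian (fun r => conj (greenRight φ ψ W r₁ r)) (greenLeft φ ψ W r₂) r₂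
          - wronskian (fun r => conj (greenRight φ ψ W r₁ r)) (greenLeft φ ψ W r₂) r₁)
        + (wronskian (fun r => conj (greenRight φ ψ W r₁ r)) (greenRight φ ψ W r₂) R
          - wronskian (fun r => conj (greenRight φ ψ W r₁ r)) (greenRight φ ψ W r₂) r₂) := by
  have hr₁ : 0 < r₁ := hε.trans_le hε₁
  have hr₂ : 0 < r₂ := hr₁.trans_le h₁₂
  have hR : 0 < R := hr₂.trans_le h₂R
  have hq' : ContinuousOn (fun r => conj (q r)) (Ioi 0) :=
    Complex.continuous_conj.comp_continuousOn hq
  have hconj {f : ℝ → ℂ} (hf : IsRadialSolution q E f) (c : ℂ) :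
      IsRadialSolution (fun r => conj (q r)) E fun r => conj (c * f r) :=
    hE ▸ (hf.const_mul c).star
  have hGc {s : ℝ} (hs : 0 < s) :=
    continuousOn_radialGreen (W := W) hφ.continuousOn hψ.continuousOn hs
  have hint {a b : ℝ} (ha : 0 < a) (hb : 0 < b) : IntervalIntegrable
      (fun r => (q r - conj (q r)) * (conj (radialGreen φ ψ W r r₁) * radialGreen φ ψ W r r₂))
      MeasureTheory.volume a b := intervalIntegrable_of_continuousOn_Ioi_zero
    ((hq.sub hq').mul ((Complex.continuous_conj.comp_continuousOn (hGc hr₁)).mul (hGc hr₂))) ha hb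
  have hI₁ := (hconj hφ (-ψ r₁ / W)).integral_eq_wronskian_sub_of_eqOn hq' hq
    (hφ.const_mul (-ψ r₂ / W)) hε hr₁
    (f := fun r => conj (radialGreen φ ψ W r r₁)) (g := (radialGreen φ ψ W · r₂))
    (fun r hr => by rw [uIcc_of_le hε₁] at hr; simp only [radialGreen_of_le hr.2]; rfl)
    (fun r hr => by rw [uIcc_of_le hε₁] at hr; exact radialGreen_of_le (hr.2.trans h₁₂))
  have hI₂ := (hconj hψ (-φ r₁ / W)).integral_eq_wronskian_sub_of_eqOn hq' hq
    (hφ.const_mul (-ψ r₂ / W)) hr₁ hr₂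
    (f := fun r => conj (radialGreen φ ψ W r r₁)) (g := (radialGreen φ ψ W · r₂))
    (fun r hr => by rw [uIcc_of_le h₁₂] at hr; simp only [radialGreen_of_ge hr.1]; rfl)
    (fun r hr => by rw [uIcc_of_le h₁₂] at hr; exact radialGreen_of_le hr.2)
  have hI₃ := (hconj hψ (-φ r₁ / W)).integral_eq_wronskian_sub_of_eqOn hq' hq
    (hψ.const_mul (-φ r₂ / W)) hr₂ hR
    (f := fun r => conj (radialGreen φ ψ W r r₁)) (g := (radialGreen φ ψ W · r₂))
    (fun r hr => by rw [uIcc_of_le h₂R] at hr; simp only [radialGreen_of_ge (h₁₂.trans hr.1)]; rfl)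
    (fun r hr => by rw [uIcc_of_le h₂R] at hr; exact radialGreen_of_ge hr.1)
  rw [← intervalIntegral.integral_add_adjacent_intervals (hint hε hr₂) (hint hr₂ hR),
    ← intervalIntegral.integral_add_adjacent_intervals (hint hε hr₁) (hint hr₁ hr₂), hI₁, hI₂, hI₃]
  rfl

end GreenIdentity

theorem stmt_9_general (k : ℝ) (q : ℝ → ℂ) (hq : ContinuousOn q (Set.Ioi 0))
    (φ ψ : ℝ → ℂ) (W : ℂ) (hW0 : W ≠ 0)
    (hφd : ∀ r > (0 : ℝ), DifferentiableAt ℝ φ r)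
    (hφd2 : ∀ r > (0 : ℝ), DifferentiableAt ℝ (deriv φ) r)
    (hφeq : ∀ r > (0 : ℝ), -deriv (deriv φ) r + q r * φ r = ((k : ℂ)) ^ 2 * φ r)
    (hψd : ∀ r > (0 : ℝ), DifferentiableAt ℝ ψ r)
    (hψd2 : ∀ r > (0 : ℝ), DifferentiableAt ℝ (deriv ψ) r)
    (hψeq : ∀ r > (0 : ℝ), -deriv (deriv ψ) r + q r * ψ r = ((k : ℂ)) ^ 2 * ψ r)
    (hW : ∀ r > (0 : ℝ), wronskian φ ψ r = W)
    (G : ℝ → ℝ → ℂ)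
    (hG : ∀ r r' : ℝ, G r r' = -(φ (min r r') * ψ (max r r')) / W) :
    ∀ ε r1 r2 R : ℝ, 0 < ε → ε < r1 → r1 ≤ r2 → r2 < R →
      wronskian (fun r => (starRingEnd ℂ) (G r r1)) (fun r => G r r2) R
        - wronskian (fun r => (starRingEnd ℂ) (G r r1)) (fun r => G r r2) ε
        - 2 * Complex.I *
          ∫ r in ε..R, (((q r).im : ℝ) : ℂ) * (starRingEnd ℂ) (G r r1) * G r r2
      = G r1 r2 - (starRingEnd ℂ) (G r2 r1) := by
  intro ε r1 r2 R hε hε1 h12 h2R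
  obtain rfl : G = radialGreen φ ψ W := funext fun r => funext (hG r)
  have hφ : IsRadialSolution q (k ^ 2) φ := fun r hr => ⟨hφd r hr, hφd2 r hr, hφeq r hr⟩
  have hψ : IsRadialSolution q (k ^ 2) ψ := fun r hr => ⟨hψd r hr, hψd2 r hr, hψeq r hr⟩
  have hr1 : 0 < r1 := hε.trans hε1
  have hr2 : 0 < r2 := hr1.trans_le h12
  rw [two_mul_I_mul_integral_im_mul,
    integral_conj_radialGreen_mul_radialGreen hq hφ hψ (by simp) hε hε1.le h12 h2R.le,
    wronskian_conj_radialGreen_of_lt hε1 (hε1.trans_le h12),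
    wronskian_conj_radialGreen_of_gt (h12.trans_lt h2R) h2R,
    radialGreen_of_le h12, radialGreen_of_ge h12]
  linear_combination
    -wronskian_conj_greenLeft_sub_wronskian_conj_greenRight (greenLeft φ ψ W r2) (hW r1 hr1) hW0
      - wronskian_greenLeft_sub_wronskian_greenRight (fun r => conj (greenRight φ ψ W r1 r))
        (hW r2 hr2) hW0

/-- Green-type identity (3.20)–(3.21): for the radial Green's function
`G(r,r') = −φ(min) ψ(max)/W` built from two C² solutions of `−u'' + q u = k² u` with
constant nonzero Wronskian `W`, and any `0 < ε < r1 ≤ r2 < R`, writing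
`u = conj(G(·,r1))`, `w = G(·,r2)`:
`[u,w](R) − [u,w](ε) − 2i ∫_ε^R Im q(r) conj(G(r,r1)) G(r,r2) dr
  = G(r1,r2) − conj(G(r2,r1))`. -/
theorem stmt_9 (k : ℝ) (hk : 0 < k) (q : ℝ → ℂ) (hq : ContinuousOn q (Set.Ioi 0))
    (φ ψ : ℝ → ℂ) (W : ℂ) (hW0 : W ≠ 0)
    (hφd : ∀ r > (0 : ℝ), DifferentiableAt ℝ φ r)
    (hφd2 : ∀ r > (0 : ℝ), DifferentiableAt ℝ (deriv φ) r)
    (hφc2 : ContinuousOn (deriv (deriv φ)) (Set.Ioi 0))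
    (hφeq : ∀ r > (0 : ℝ), -deriv (deriv φ) r + q r * φ r = ((k : ℂ)) ^ 2 * φ r)
    (hψd : ∀ r > (0 : ℝ), DifferentiableAt ℝ ψ r)
    (hψd2 : ∀ r > (0 : ℝ), DifferentiableAt ℝ (deriv ψ) r)
    (hψc2 : ContinuousOn (deriv (deriv ψ)) (Set.Ioi 0))
    (hψeq : ∀ r > (0 : ℝ), -deriv (deriv ψ) r + q r * ψ r = ((k : ℂ)) ^ 2 * ψ r)
    (hW : ∀ r > (0 : ℝ), wronskian φ ψ r = W)
    (G : ℝ → ℝ → ℂ)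
    (hG : ∀ r r' : ℝ, G r r' = -(φ (min r r') * ψ (max r r')) / W) :
    ∀ ε r1 r2 R : ℝ, 0 < ε → ε < r1 → r1 ≤ r2 → r2 < R →
      wronskian (fun r => (starRingEnd ℂ) (G r r1)) (fun r => G r r2) R
        - wronskian (fun r => (starRingEnd ℂ) (G r r1)) (fun r => G r r2) ε
        - 2 * Complex.I *
          ∫ r in ε..R, (((q r).im : ℝ) : ℂ) * (starRingEnd ℂ) (G r r1) * G r r2
      = G r1 r2 - (starRingEnd ℂ) (G r2 r1) :=
  stmt_9_general k q hq φ ψ W hW0 hφd hφd2 hφeq hψd hψd2 hψeq hW G hG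
end

section
/- Let k > 0, R_a > 0, and let q : (0,∞) → ℂ be continuous, with Im q bounded and Im q(r) = 0 for all r ≥ R_a. Let φ, ψ be twice continuously differentiable solutions of −u'' + q·u = k²·u on (0,∞) with constant nonzero Wronskian W = [φ,ψ], and define G(r,r') = −φ(min(r,r'))·ψ(max(r,r'))/W. Assume: φ(r) = O(r) and φ'(r) = O(1) as r → 0⁺; ψ is bounded on [1,∞); and ψ'(r) − ik·ψ(r) = O(1/r) as r → +∞. Then for all fixed 0 < r1 ≤ r2: ∫_0^R (−Im q(r))·conj(G(r,r1))·G(r,r2) dr + k·conj(G(R,r1))·G(R,r2) = Im G(r1,r2) + O(1/R) as R → +∞. -/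
/-!
For solutions `u, v` of `-u'' + q u = k² u` the Wronskian `[ū, v] = ū v' - ū' v` satisfies
`[ū, v]' = 2i Im q · ū v`. Cutting `(0, R)` at `r₁ ≤ r₂`, where `G(·, r₁)` and `G(·, r₂)` are
products of `φ` and `ψ`, the volume integral becomes a sum of boundary Wronskians. The one at `0`
vanishes since `φ = O(r)`, `φ' = O(1)`; those at `r₁` and `r₂` combine through `[φ, ψ] = W` into
`Im G(r₁, r₂)`; the one at `R` together with the surface term is
`conj (φ r₁) φ r₂ / |W|² · (i/2) (ψ̄ (ψ' - ikψ) - conj (ψ' - ikψ) ψ)(R)`, which is `O(1/R)` by the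
radiation condition.
-/

open Filter Asymptotics

open Complex ComplexConjugate MeasureTheory Set Topology intervalIntegral

theorem ContinuousOn.intervalIntegrable_of_isBigO_one {E : Type*} [NormedAddCommGroup E]
    {f : ℝ → E} {a b : ℝ} (hab : a ≤ b)
    (hf : ContinuousOn f (Ioi a)) (h : f =O[𝓝[>] a] (fun _ => (1 : ℝ))) :
    IntervalIntegrable f volume a b := by
  obtain ⟨C, hC⟩ := h.bound
  obtain ⟨c, hac, hc⟩ := mem_nhdsGT_iff_exists_Ioo_subset.mp hC
  rw [intervalIntegrable_iff_integrableOn_Ioc_of_le hab]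
  refine IntegrableOn.mono_set (t := Ioo a c ∪ Icc c b) (IntegrableOn.union ?_ ?_)
    fun x hx => (lt_or_ge x c).imp (fun h => ⟨hx.1, h⟩) (fun h => ⟨h, hx.2⟩)
  · exact ⟨(hf.mono Ioo_subset_Ioi_self).aestronglyMeasurable measurableSet_Ioo,
      HasFiniteIntegral.restrict_of_bounded _ measure_Ioo_lt_top
        (ae_restrict_of_forall_mem measurableSet_Ioo hc)⟩
  · exact ContinuousOn.integrableOn_Icc (hf.mono fun x hx => lt_of_lt_of_le hac hx.1)

namespace Helmholtz

def IsSolutionOn (q : ℝ → ℂ) (k : ℝ) (u : ℝ → ℂ) (s : Set ℝ) : Prop :=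
  ∀ r ∈ s, DifferentiableAt ℝ u r ∧ DifferentiableAt ℝ (deriv u) r ∧
    -deriv (deriv u) r + q r * u r = (k : ℂ) ^ 2 * u r

/-- The Wronskian `[ū, v]`. -/
noncomputable def conjWronskian (u v : ℝ → ℂ) (r : ℝ) : ℂ :=
  conj (u r) * deriv v r - conj (deriv u r) * v r

variable {q : ℝ → ℂ} {k : ℝ} {u v : ℝ → ℂ} {s : Set ℝ}

theorem IsSolutionOn.continuousOn (hu : IsSolutionOn q k u s) : ContinuousOn u s :=
  fun r hr => (hu r hr).1.continuousAt.continuousWithinAt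

theorem IsSolutionOn.hasDerivAt_conjWronskian (hu : IsSolutionOn q k u s)
    (hv : IsSolutionOn q k v s) {r : ℝ} (hr : r ∈ s) :
    HasDerivAt (fun x => I / 2 * conjWronskian u v x)
      (((-(q r).im : ℝ) : ℂ) * conj (u r) * v r) r := by
  obtain ⟨hu₁, hu₂, hu_eq⟩ := hu r hr
  obtain ⟨hv₁, hv₂, hv_eq⟩ := hv r hr
  have hconj₁ : HasDerivAt (fun x => conj (u x)) (conj (deriv u r)) r :=
    hu₁.hasDerivAt.star
  have hconj₂ : HasDerivAt (fun x => conj (deriv u x)) (conj (deriv (deriv u) r)) r :=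
    hu₂.hasDerivAt.star
  refine (((hconj₁.mul hv₂.hasDerivAt).sub (hconj₂.mul hv₁.hasDerivAt)).const_mul
    (I / 2)).congr_deriv ?_
  have him : q r - conj (q r) = 2 * (q r).im * I := by rw [sub_conj]; push_cast; ring
  have hu_conj := congrArg conj hu_eq
  simp only [map_add, map_neg, map_mul, map_pow, conj_ofReal] at hu_conj
  push_cast
  linear_combination (-(I / 2) * conj (u r)) * hv_eq + (I / 2 * v r) * hu_conj
    + (I / 2 * conj (u r) * v r) * him + ((q r).im * conj (u r) * v r) * I_sq

theorem IsSolutionOn.integral_eq_conjWronskian_sub (hu : IsSolutionOn q k u s)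
    (hv : IsSolutionOn q k v s) {a b : ℝ} (hab : uIcc a b ⊆ s) (hq : ContinuousOn q (uIcc a b)) :
    ∫ r in a..b, ((-(q r).im : ℝ) : ℂ) * conj (u r) * v r =
      I / 2 * conjWronskian u v b - I / 2 * conjWronskian u v a := by
  have hu_cont := hu.continuousOn.mono hab
  have hv_cont := hv.continuousOn.mono hab
  exact integral_eq_sub_of_hasDerivAt (fun r hr => hu.hasDerivAt_conjWronskian hv (hab hr))
    (ContinuousOn.intervalIntegrable (by fun_prop))

theorem IsSolutionOn.integral_eq_conjWronskian_of_tendsto (hu : IsSolutionOn q k u (Ioi 0))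
    (hv : IsSolutionOn q k v (Ioi 0)) {b : ℝ} (hb : 0 < b)
    (hint : IntervalIntegrable (fun r => ((-(q r).im : ℝ) : ℂ) * conj (u r) * v r) volume 0 b)
    (h₀ : Tendsto (conjWronskian u v) (𝓝[>] 0) (𝓝 0)) :
    ∫ r in (0 : ℝ)..b, ((-(q r).im : ℝ) : ℂ) * conj (u r) * v r =
      I / 2 * conjWronskian u v b := by
  have hderiv (r : ℝ) (hr : 0 < r) := hu.hasDerivAt_conjWronskian hv hr
  rw [integral_eq_sub_of_hasDerivAt_of_tendsto hb (fun r hr => hderiv r hr.1) hint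
    (by simpa using h₀.const_mul (I / 2)) (hderiv b hb).continuousAt.continuousWithinAt, sub_zero]

theorem tendsto_conjWronskian_zero {l : Filter ℝ} (hu : Tendsto u l (𝓝 0))
    (hv : Tendsto v l (𝓝 0)) (hu' : deriv u =O[l] (fun _ => (1 : ℝ)))
    (hv' : deriv v =O[l] (fun _ => (1 : ℝ))) :
    Tendsto (conjWronskian u v) l (𝓝 0) := by
  have hu_conj : Tendsto (fun r => conj (u r)) l (𝓝 0) := by
    simpa [Function.comp_def] using (continuous_conj.tendsto 0).comp hu
  have hu'_conj : (fun r => conj (deriv u r)) =O[l] (fun _ => (1 : ℝ)) :=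
    (isBigO_of_le _ fun r => (RCLike.norm_conj (deriv u r)).le).trans hu'
  rw [← sub_zero (0 : ℂ)]
  exact (hu_conj.zero_mul_isBoundedUnder_le hv'.isBoundedUnder_le).sub
    (isBoundedUnder_le_mul_tendsto_zero hu'_conj.isBoundedUnder_le hv)

theorem intervalIntegrable_im_mul_conj_mul_self (hq : ContinuousOn q (Ioi 0))
    (hu : ContinuousOn u (Ioi 0)) {M : ℝ} (hM : ∀ r > 0, |(q r).im| ≤ M)
    (hu₀ : u =O[𝓝[>] 0] (fun _ => (1 : ℝ))) {b : ℝ} (hb : 0 ≤ b) :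
    IntervalIntegrable (fun r => ((-(q r).im : ℝ) : ℂ) * conj (u r) * u r) volume 0 b := by
  have him : (fun r => ((-(q r).im : ℝ) : ℂ)) =O[𝓝[>] 0] (fun _ => (1 : ℝ)) :=
    IsBigO.of_bound M <| eventually_nhdsWithin_of_forall fun r hr => by simpa using hM r hr
  have hu_conj : (fun r => conj (u r)) =O[𝓝[>] 0] (fun _ => (1 : ℝ)) :=
    (isBigO_of_le _ fun r => (RCLike.norm_conj (u r)).le).trans hu₀
  exact ContinuousOn.intervalIntegrable_of_isBigO_one hb (by fun_prop)
    (by simpa using (him.mul hu_conj).mul hu₀)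

theorem isBigO_conjWronskian_add_of_radiation (hψ : ψ =O[atTop] (fun _ => (1 : ℝ)))
    (hrad : (fun r => deriv ψ r - I * k * ψ r) =O[atTop] (fun r : ℝ => 1 / r)) :
    (fun R => I / 2 * conjWronskian ψ ψ R + k * conj (ψ R) * ψ R)
      =O[atTop] (fun R : ℝ => 1 / R) := by
  have hψ_conj : (fun r => conj (ψ r)) =O[atTop] (fun _ => (1 : ℝ)) :=
    (isBigO_of_le _ fun r => (RCLike.norm_conj (ψ r)).le).trans hψ
  have hrad_conj : (fun r => conj (deriv ψ r - I * k * ψ r)) =O[atTop] (fun r : ℝ => 1 / r) :=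
    (isBigO_of_le _ fun r => (RCLike.norm_conj _).le).trans hrad
  have hsplit : (fun R => I / 2 * conjWronskian ψ ψ R + k * conj (ψ R) * ψ R) = fun R =>
      I / 2 * (conj (ψ R) * (deriv ψ R - I * k * ψ R)
        - conj (deriv ψ R - I * k * ψ R) * ψ R) := by
    ext R
    simp only [conjWronskian, map_sub, map_mul, conj_I, conj_ofReal]
    linear_combination (k * conj (ψ R) * ψ R) * I_sq
  have h₁ : (fun R => conj (ψ R) * (deriv ψ R - I * k * ψ R))
      =O[atTop] (fun R : ℝ => 1 / R) := by
    simpa using hψ_conj.mul hrad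
  have h₂ : (fun R => conj (deriv ψ R - I * k * ψ R) * ψ R) =O[atTop] (fun R : ℝ => 1 / R) := by
    simpa using hrad_conj.mul hψ
  rw [hsplit]
  exact (h₁.sub h₂).const_mul_left _

noncomputable def green (φ ψ : ℝ → ℂ) (W : ℂ) (r r' : ℝ) : ℂ :=
  -(φ (min r r') * ψ (max r r')) / W

variable {φ ψ : ℝ → ℂ} {W : ℂ}

theorem green_of_le {r r' : ℝ} (h : r ≤ r') : green φ ψ W r r' = -(φ r * ψ r') / W := by
  rw [green, min_eq_left h, max_eq_right h]

theorem green_of_ge {r r' : ℝ} (h : r' ≤ r) : green φ ψ W r r' = -(φ r' * ψ r) / W := by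
  rw [green, min_eq_right h, max_eq_left h]

theorem continuousOn_green (hφ : ContinuousOn φ (Ioi 0)) (hψ : ContinuousOn ψ (Ioi 0)) {r' : ℝ}
    (hr' : 0 < r') : ContinuousOn (fun r => green φ ψ W r r') (Ioi 0) := by
  have hmin : ContinuousOn (fun r => φ (min r r')) (Ioi 0) :=
    hφ.comp (continuous_id.min continuous_const).continuousOn fun r hr => lt_min hr hr'
  have hmax : ContinuousOn (fun r => ψ (max r r')) (Ioi 0) :=
    hψ.comp (continuous_id.max continuous_const).continuousOn
      fun r hr => mem_Ioi.2 (lt_max_of_lt_left hr)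
  exact (hmin.mul hmax).neg.div_const W

theorem integral_green_eq (hφ : IsSolutionOn q k φ (Ioi 0)) (hψ : IsSolutionOn q k ψ (Ioi 0))
    (hq : ContinuousOn q (Ioi 0)) {r₁ r₂ R : ℝ} (hr₁ : 0 < r₁) (hr₁₂ : r₁ ≤ r₂) (hR : r₂ ≤ R)
    (hint : IntervalIntegrable (fun r => ((-(q r).im : ℝ) : ℂ) * conj (φ r) * φ r) volume 0 r₁)
    (h₀ : Tendsto (conjWronskian φ φ) (𝓝[>] 0) (𝓝 0)) :
    ∫ r in (0 : ℝ)..R, ((-(q r).im : ℝ) : ℂ) * conj (green φ ψ W r r₁) * green φ ψ W r r₂ =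
      I / 2 * (conj (ψ r₁ / W) * (ψ r₂ / W) * conjWronskian φ φ r₁
        + conj (φ r₁ / W) * (ψ r₂ / W) * (conjWronskian ψ φ r₂ - conjWronskian ψ φ r₁)
        + conj (φ r₁ / W) * (φ r₂ / W) * (conjWronskian ψ ψ R - conjWronskian ψ ψ r₂)) := by
  set f := fun r => ((-(q r).im : ℝ) : ℂ) * conj (green φ ψ W r r₁) * green φ ψ W r r₂
  have hsub {a b : ℝ} (ha : 0 < a) (hab : a ≤ b) : uIcc a b ⊆ Ioi 0 := by
    rw [uIcc_of_le hab]; exact fun r hr => ha.trans_le hr.1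
  have h₁ : EqOn f (fun r => conj (ψ r₁ / W) * (ψ r₂ / W) *
      (((-(q r).im : ℝ) : ℂ) * conj (φ r) * φ r)) (uIcc 0 r₁) := by
    intro r hr
    rw [uIcc_of_le hr₁.le] at hr
    simp only [f, green_of_le hr.2, green_of_le (hr.2.trans hr₁₂), map_div₀, map_neg, map_mul]
    ring
  have h₂ : EqOn f (fun r => conj (φ r₁ / W) * (ψ r₂ / W) *
      (((-(q r).im : ℝ) : ℂ) * conj (ψ r) * φ r)) (uIcc r₁ r₂) := by
    intro r hr
    rw [uIcc_of_le hr₁₂] at hr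
    simp only [f, green_of_ge hr.1, green_of_le hr.2, map_div₀, map_neg, map_mul]
    ring
  have h₃ : EqOn f (fun r => conj (φ r₁ / W) * (φ r₂ / W) *
      (((-(q r).im : ℝ) : ℂ) * conj (ψ r) * ψ r)) (uIcc r₂ R) := by
    intro r hr
    rw [uIcc_of_le hR] at hr
    simp only [f, green_of_ge (hr₁₂.trans hr.1), green_of_ge hr.1, map_div₀, map_neg, map_mul]
    ring
  have hf : ContinuousOn f (Ioi 0) := by
    have := continuousOn_green (W := W) hφ.continuousOn hψ.continuousOn hr₁
    have := continuousOn_green (W := W) hφ.continuousOn hψ.continuousOn (hr₁.trans_le hr₁₂)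
    fun_prop
  have hint₀ : IntervalIntegrable f volume 0 r₁ :=
    (hint.const_mul _).congr_ae
      (ae_restrict_of_forall_mem measurableSet_uIoc fun r hr => (h₁ (uIoc_subset_uIcc hr)).symm)
  have hint₁ : IntervalIntegrable f volume r₁ r₂ :=
    (hf.mono (hsub hr₁ hr₁₂)).intervalIntegrable
  have hint₂ : IntervalIntegrable f volume r₂ R :=
    (hf.mono (hsub (hr₁.trans_le hr₁₂) hR)).intervalIntegrable
  rw [← integral_add_adjacent_intervals (hint₀.trans hint₁) hint₂,
    ← integral_add_adjacent_intervals hint₀ hint₁, integral_congr h₁, integral_congr h₂,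
    integral_congr h₃, intervalIntegral.integral_const_mul, intervalIntegral.integral_const_mul,
    intervalIntegral.integral_const_mul,
    hφ.integral_eq_conjWronskian_of_tendsto hφ hr₁ hint h₀,
    hψ.integral_eq_conjWronskian_sub hφ (hsub hr₁ hr₁₂) (hq.mono (hsub hr₁ hr₁₂)),
    hψ.integral_eq_conjWronskian_sub hψ (hsub (hr₁.trans_le hr₁₂) hR)
      (hq.mono (hsub (hr₁.trans_le hr₁₂) hR))]
  ring

theorem integral_green_add_boundary_eq (hφ : IsSolutionOn q k φ (Ioi 0))
    (hψ : IsSolutionOn q k ψ (Ioi 0)) (hq : ContinuousOn q (Ioi 0)) (hW₀ : W ≠ 0)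
    (hW : ∀ r > 0, wronskian φ ψ r = W) {r₁ r₂ R : ℝ} (hr₁ : 0 < r₁) (hr₁₂ : r₁ ≤ r₂)
    (hR : r₂ ≤ R)
    (hint : IntervalIntegrable (fun r => ((-(q r).im : ℝ) : ℂ) * conj (φ r) * φ r) volume 0 r₁)
    (h₀ : Tendsto (conjWronskian φ φ) (𝓝[>] 0) (𝓝 0)) :
    (∫ r in (0 : ℝ)..R, ((-(q r).im : ℝ) : ℂ) * conj (green φ ψ W r r₁) * green φ ψ W r r₂)
        + k * conj (green φ ψ W R r₁) * green φ ψ W R r₂ - (((green φ ψ W r₁ r₂).im : ℝ) : ℂ) =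
      conj (φ r₁ / W) * (φ r₂ / W) * (I / 2 * conjWronskian ψ ψ R + k * conj (ψ R) * ψ R) := by
  have hW₁ := congrArg conj (hW r₁ hr₁)
  have hW₂ := hW r₂ (hr₁.trans_le hr₁₂)
  have hW₀' : conj W ≠ 0 := (map_ne_zero _).2 hW₀
  rw [integral_green_eq hφ hψ hq hr₁ hr₁₂ hR hint h₀, green_of_ge (hr₁₂.trans hR), green_of_ge hR,
    green_of_le hr₁₂, im_eq_sub_conj]
  simp only [wronskian, conjWronskian, map_div₀, map_neg, map_mul, map_sub] at hW₁ hW₂ ⊢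
  field_simp
  linear_combination I ^ 2 * ψ r₂ * φ r₁ * hW₁ - I ^ 2 * conj (φ r₁) * conj (ψ r₂) * hW₂
    + (ψ r₂ * φ r₁ * conj W - conj (φ r₁) * conj (ψ r₂) * W) * I_sq

end Helmholtz

open Helmholtz

theorem stmt_10_general (k : ℝ) (q : ℝ → ℂ) (hq : ContinuousOn q (Set.Ioi 0))
    (hqbdd : ∃ M, ∀ r > (0 : ℝ), |(q r).im| ≤ M)
    (φ ψ : ℝ → ℂ) (W : ℂ) (hW0 : W ≠ 0)
    (hφd : ∀ r > (0 : ℝ), DifferentiableAt ℝ φ r)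
    (hφd2 : ∀ r > (0 : ℝ), DifferentiableAt ℝ (deriv φ) r)
    (hφeq : ∀ r > (0 : ℝ), -deriv (deriv φ) r + q r * φ r = ((k : ℂ)) ^ 2 * φ r)
    (hψd : ∀ r > (0 : ℝ), DifferentiableAt ℝ ψ r)
    (hψd2 : ∀ r > (0 : ℝ), DifferentiableAt ℝ (deriv ψ) r)
    (hψeq : ∀ r > (0 : ℝ), -deriv (deriv ψ) r + q r * ψ r = ((k : ℂ)) ^ 2 * ψ r)
    (hW : ∀ r > (0 : ℝ), wronskian φ ψ r = W)
    (hφ0 : φ =O[nhdsWithin 0 (Set.Ioi 0)] (fun r : ℝ => r))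
    (hφ0' : (deriv φ) =O[nhdsWithin 0 (Set.Ioi 0)] (fun _ : ℝ => (1 : ℝ)))
    (hψbdd : ∃ C, ∀ r ≥ (1 : ℝ), ‖ψ r‖ ≤ C)
    (hψrad : (fun r : ℝ => deriv ψ r - Complex.I * (k : ℂ) * ψ r)
      =O[atTop] (fun r : ℝ => 1 / r))
    (G : ℝ → ℝ → ℂ)
    (hG : ∀ r r' : ℝ, G r r' = -(φ (min r r') * ψ (max r r')) / W)
    (r1 r2 : ℝ) (hr1 : 0 < r1) (hr12 : r1 ≤ r2) :
    (fun R : ℝ =>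
        (∫ r in (0 : ℝ)..R,
          ((-(q r).im : ℝ) : ℂ) * (starRingEnd ℂ) (G r r1) * G r r2)
        + (k : ℂ) * (starRingEnd ℂ) (G R r1) * G R r2
        - (((G r1 r2).im : ℝ) : ℂ))
      =O[atTop] (fun R : ℝ => 1 / R) := by
  have hφ : IsSolutionOn q k φ (Ioi 0) := fun r hr => ⟨hφd r hr, hφd2 r hr, hφeq r hr⟩
  have hψ : IsSolutionOn q k ψ (Ioi 0) := fun r hr => ⟨hψd r hr, hψd2 r hr, hψeq r hr⟩
  obtain rfl : G = green φ ψ W := funext fun r => funext (hG r)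
  obtain ⟨M, hM⟩ := hqbdd
  obtain ⟨C, hC⟩ := hψbdd
  have hφ_lim : Tendsto φ (𝓝[>] 0) (𝓝 0) :=
    hφ0.trans_tendsto (tendsto_nhdsWithin_of_tendsto_nhds tendsto_id)
  have hint := intervalIntegrable_im_mul_conj_mul_self hq hφ.continuousOn hM
    (hφ_lim.isBigO_one ℝ) hr1.le
  have hψ_one : ψ =O[atTop] (fun _ => (1 : ℝ)) :=
    IsBigO.of_bound C <| (eventually_ge_atTop 1).mono fun r hr => by simpa using hC r hr
  refine ((isBigO_conjWronskian_add_of_radiation hψ_one hψrad).const_mul_left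
    (conj (φ r1 / W) * (φ r2 / W))).congr' ?_ EventuallyEq.rfl
  filter_upwards [eventually_ge_atTop r2] with R hR
  exact (integral_green_add_boundary_eq hφ hψ hq hW0 hW hr1 hr12 hR hint
    (tendsto_conjWronskian_zero hφ_lim hφ_lim hφ0' hφ0')).symm

/-- Deterministic core of Proposition 2.1: for the radial Green's function
`G(r,r') = −φ(min) ψ(max)/W` with regular `φ` (i.e. `φ(r) = O(r)`, `φ'(r) = O(1)` as
`r → 0⁺`) and outgoing `ψ` (bounded on `[1,∞)` with `ψ' − ikψ = O(1/r)`), and sources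
excited in the volume with power `−Im q` (with `Im q` bounded, vanishing for `r ≥ Ra`)
and on the sphere `r = R` with power `k`:
`∫_0^R (−Im q) conj(G(·,r1)) G(·,r2) + k conj(G(R,r1)) G(R,r2) = Im G(r1,r2) + O(1/R)`
as `R → +∞`. -/
theorem stmt_10 (k Ra : ℝ) (hk : 0 < k) (hRa : 0 < Ra)
    (q : ℝ → ℂ) (hq : ContinuousOn q (Set.Ioi 0))
    (hqbdd : ∃ M, ∀ r > (0 : ℝ), |(q r).im| ≤ M)
    (hqatm : ∀ r ≥ Ra, (q r).im = 0)
    (φ ψ : ℝ → ℂ) (W : ℂ) (hW0 : W ≠ 0)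
    (hφd : ∀ r > (0 : ℝ), DifferentiableAt ℝ φ r)
    (hφd2 : ∀ r > (0 : ℝ), DifferentiableAt ℝ (deriv φ) r)
    (hφc2 : ContinuousOn (deriv (deriv φ)) (Set.Ioi 0))
    (hφeq : ∀ r > (0 : ℝ), -deriv (deriv φ) r + q r * φ r = ((k : ℂ)) ^ 2 * φ r)
    (hψd : ∀ r > (0 : ℝ), DifferentiableAt ℝ ψ r)
    (hψd2 : ∀ r > (0 : ℝ), DifferentiableAt ℝ (deriv ψ) r)
    (hψc2 : ContinuousOn (deriv (deriv ψ)) (Set.Ioi 0))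
    (hψeq : ∀ r > (0 : ℝ), -deriv (deriv ψ) r + q r * ψ r = ((k : ℂ)) ^ 2 * ψ r)
    (hW : ∀ r > (0 : ℝ), wronskian φ ψ r = W)
    (hφ0 : φ =O[nhdsWithin 0 (Set.Ioi 0)] (fun r : ℝ => r))
    (hφ0' : (deriv φ) =O[nhdsWithin 0 (Set.Ioi 0)] (fun _ : ℝ => (1 : ℝ)))
    (hψbdd : ∃ C, ∀ r ≥ (1 : ℝ), ‖ψ r‖ ≤ C)
    (hψrad : (fun r : ℝ => deriv ψ r - Complex.I * (k : ℂ) * ψ r)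
      =O[atTop] (fun r : ℝ => 1 / r))
    (G : ℝ → ℝ → ℂ)
    (hG : ∀ r r' : ℝ, G r r' = -(φ (min r r') * ψ (max r r')) / W)
    (r1 r2 : ℝ) (hr1 : 0 < r1) (hr12 : r1 ≤ r2) :
    (fun R : ℝ =>
        (∫ r in (0 : ℝ)..R,
          ((-(q r).im : ℝ) : ℂ) * (starRingEnd ℂ) (G r r1) * G r r2)
        + (k : ℂ) * (starRingEnd ℂ) (G R r1) * G R r2
        - (((G r1 r2).im : ℝ) : ℂ))
      =O[atTop] (fun R : ℝ => 1 / R) :=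
  stmt_10_general k q hq hqbdd φ ψ W hW0 hφd hφd2 hφeq hψd hψd2 hψeq hW hφ0 hφ0' hψbdd hψrad G hG r1
    r2 hr1 hr12
end

section
/- Let k > 0 and H1, H2 ∈ ℂ ∖ {0}. For s ∈ ℂ and j = 1,2 define G_j(s) = (i/(2k))·( conj(H_j) − s·H_j )·H_j. Then the map s ↦ ( Im G_1(s), Im G_2(s) ) from ℂ to ℝ² is injective if and only if Im( H_1²·conj(H_2²) ) ≠ 0. Moreover, writing H_j = μ_j·exp(i·ϑ_j/2) with μ_j > 0 and ϑ_j ∈ ℝ, the condition Im( H_1²·conj(H_2²) ) ≠ 0 is equivalent to sin(ϑ_1 − ϑ_2) ≠ 0. -/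
/-!
Up to the constant `|H|² / (2k)` and the factor `-1 / (2k)`, `Im G_j(s)` is `Re (s H_j²)`, so the map
is injective iff the real-linear map `s ↦ (Re (s a), Re (s b))` with `a = H_1²`, `b = H_2²` is. Its
determinant is `Im (a conj b)`; when it vanishes, `s = i conj a` is a nonzero kernel vector. In polar
form `a conj b = μ_1² μ_2² exp (i (ϑ_1 - ϑ_2))`, whose imaginary part vanishes iff `sin (ϑ_1 - ϑ_2)` does.
-/

open Complex ComplexConjugate

theorem im_I_div_mul_conj_sub_mul_mul {k : ℝ} (hk : k ≠ 0) (H s : ℂ) :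
    (I / (2 * (k : ℂ)) * (conj H - s * H) * H).im = (normSq H - (s * H ^ 2).re) / (2 * k) := by
  rw [show (2 * (k : ℂ)) = ((2 * k : ℝ) : ℂ) by push_cast; ring]
  simp [div_eq_mul_inv, ← ofReal_inv, mul_im, mul_re, normSq_apply, pow_two]
  field_simp
  ring

theorem injective_re_mul_prod_iff {a : ℂ} (ha : a ≠ 0) (b : ℂ) :
    Function.Injective (fun s : ℂ => ((s * a).re, (s * b).re)) ↔ (a * conj b).im ≠ 0 := by
  have hD : (a * conj b).im = a.im * b.re - a.re * b.im := by
    simp only [mul_im, conj_re, conj_im]; ring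
  rw [hD]
  constructor
  · intro hinj hD0
    have hs : I * conj a ≠ 0 := mul_ne_zero I_ne_zero ((map_ne_zero _).mpr ha)
    refine hs (hinj (Prod.ext ?_ ?_))
    · simp only [mul_re, mul_im, I_re, I_im, conj_re, conj_im, zero_mul, zero_re]; ring
    · simp only [mul_re, mul_im, I_re, I_im, conj_re, conj_im, zero_mul, zero_re]
      linear_combination hD0
  · intro hD0 s t hst
    simp only [Prod.mk.injEq, mul_re] at hst
    obtain ⟨ha', hb'⟩ := hst
    have hre : (s.re - t.re) * (a.im * b.re - a.re * b.im) = 0 := by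
      linear_combination a.im * hb' - b.im * ha'
    have him : (s.im - t.im) * (a.im * b.re - a.re * b.im) = 0 := by
      linear_combination a.re * hb' - b.re * ha'
    exact Complex.ext (sub_eq_zero.mp ((mul_eq_zero.mp hre).resolve_right hD0))
      (sub_eq_zero.mp ((mul_eq_zero.mp him).resolve_right hD0))

theorem injective_affine_prod_iff {d : ℝ} (hd : d ≠ 0) (c₁ c₂ : ℝ) {α : Type*} (f g : α → ℝ) :
    Function.Injective (fun x => ((c₁ - f x) / d, (c₂ - g x) / d)) ↔
      Function.Injective (fun x => (f x, g x)) := by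
  have he : Function.Injective (fun p : ℝ × ℝ => ((c₁ - p.1) / d, (c₂ - p.2) / d)) := by
    intro p q h
    simp only [Prod.mk.injEq, div_left_inj' hd, sub_right_inj] at h
    exact Prod.ext h.1 h.2
  exact he.of_comp_iff (fun x => (f x, g x))

theorem sq_ofReal_mul_exp_I_mul_div_two (μ ϑ : ℝ) :
    ((μ : ℂ) * exp (I * ϑ / 2)) ^ 2 = ((μ ^ 2 : ℝ) : ℂ) * exp (ϑ * I) := by
  rw [mul_pow, ← exp_nat_mul]
  push_cast
  ring_nf

theorem im_ofReal_mul_exp_mul_conj (r₁ r₂ θ₁ θ₂ : ℝ) :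
    ((r₁ : ℂ) * exp (θ₁ * I) * conj ((r₂ : ℂ) * exp (θ₂ * I))).im
      = r₁ * r₂ * Real.sin (θ₁ - θ₂) := by
  simp only [mul_im, conj_re, conj_im, re_ofReal_mul, exp_ofReal_mul_I_re, ofReal_re, ofReal_im,
    exp_ofReal_mul_I_im, Real.sin_sub]
  ring

theorem stmt_11_general (k : ℝ) (hk : 0 < k) (H1 H2 : ℂ) (hH1 : H1 ≠ 0)
    (μ1 μ2 ϑ1 ϑ2 : ℝ) (hμ1 : 0 < μ1) (hμ2 : 0 < μ2)
    (hpolar1 : H1 = (μ1 : ℂ) * Complex.exp (Complex.I * (ϑ1 : ℂ) / 2))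
    (hpolar2 : H2 = (μ2 : ℂ) * Complex.exp (Complex.I * (ϑ2 : ℂ) / 2)) :
    (Function.Injective (fun s : ℂ =>
        (((Complex.I / (2 * (k : ℂ))) * ((starRingEnd ℂ) H1 - s * H1) * H1).im,
         ((Complex.I / (2 * (k : ℂ))) * ((starRingEnd ℂ) H2 - s * H2) * H2).im))
      ↔ (H1 ^ 2 * (starRingEnd ℂ) (H2 ^ 2)).im ≠ 0) ∧
    ((H1 ^ 2 * (starRingEnd ℂ) (H2 ^ 2)).im ≠ 0 ↔ Real.sin (ϑ1 - ϑ2) ≠ 0) := by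
  refine ⟨?_, ?_⟩
  · simp only [im_I_div_mul_conj_sub_mul_mul hk.ne']
    rw [injective_affine_prod_iff (by positivity), injective_re_mul_prod_iff (pow_ne_zero 2 hH1)]
  · rw [hpolar1, hpolar2, sq_ofReal_mul_exp_I_mul_div_two, sq_ofReal_mul_exp_I_mul_div_two,
      im_ofReal_mul_exp_mul_conj]
    have hμ : μ1 ^ 2 * μ2 ^ 2 ≠ 0 := by positivity
    exact not_congr (mul_eq_zero_iff_left hμ)

/-- Core of Lemma 3.5: with `G_j(s) = (i/(2k)) (conj(H_j) − s H_j) H_j`, the map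
`s ↦ (Im G_1(s), Im G_2(s))` is injective iff `Im(H_1² conj(H_2²)) ≠ 0`; writing
`H_j = μ_j exp(iϑ_j/2)` this condition is equivalent to `sin(ϑ_1 − ϑ_2) ≠ 0`. -/
theorem stmt_11 (k : ℝ) (hk : 0 < k) (H1 H2 : ℂ) (hH1 : H1 ≠ 0) (hH2 : H2 ≠ 0)
    (μ1 μ2 ϑ1 ϑ2 : ℝ) (hμ1 : 0 < μ1) (hμ2 : 0 < μ2)
    (hpolar1 : H1 = (μ1 : ℂ) * Complex.exp (Complex.I * (ϑ1 : ℂ) / 2))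
    (hpolar2 : H2 = (μ2 : ℂ) * Complex.exp (Complex.I * (ϑ2 : ℂ) / 2)) :
    (Function.Injective (fun s : ℂ =>
        (((Complex.I / (2 * (k : ℂ))) * ((starRingEnd ℂ) H1 - s * H1) * H1).im,
         ((Complex.I / (2 * (k : ℂ))) * ((starRingEnd ℂ) H2 - s * H2) * H2).im))
      ↔ (H1 ^ 2 * (starRingEnd ℂ) (H2 ^ 2)).im ≠ 0) ∧
    ((H1 ^ 2 * (starRingEnd ℂ) (H2 ^ 2)).im ≠ 0 ↔ Real.sin (ϑ1 - ϑ2) ≠ 0) :=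
  stmt_11_general k hk H1 H2 hH1 μ1 μ2 ϑ1 ϑ2 hμ1 hμ2 hpolar1 hpolar2
end

section
/- Let (φ_ℓ)_{ℓ≥0} be a sequence of continuous complex-valued functions on (0,∞) such that: (i) for each ℓ, the zero set { r > 0 : φ_ℓ(r) = 0 } has no accumulation point in (0,∞); and (ii) for every R0 > 0, sup_{0 < r ≤ R0} | r^{−ℓ−1}·φ_ℓ(r) − 1 | → 0 as ℓ → ∞. Then the set Σ = { r > 0 : φ_ℓ(r) = 0 for some ℓ ≥ 0 } has no accumulation point in (0,∞). -/
open Filter Topology Set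

/-!
Near a point `x > 0` the uniform asymptotics `φ_ℓ(r) ≈ r^{ℓ+1}` on `(0, x + 1]` rule out zeros
of `φ_ℓ` there once `ℓ` is large, so near `x` the set `Σ` is a finite union of zero sets, none of
which accumulates at `x`.
-/

section AccPt

variable {X : Type*} [TopologicalSpace X] {x : X}

theorem not_accPt_biUnion_of_finite {ι : Type*} {s : ι → Set X} {I : Set ι} (hI : I.Finite)
    (h : ∀ i ∈ I, ¬AccPt x (𝓟 (s i))) : ¬AccPt x (𝓟 (⋃ i ∈ I, s i)) := by
  simp only [accPt_iff_frequently_nhdsNE, not_frequently, mem_iUnion₂, not_exists] at h ⊢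
  exact ((eventually_all_finite hI).2 h).mono fun y hy i hi => hy i hi

theorem not_accPt_iUnion_of_eventually_disjoint {s : ℕ → Set X} {U : Set X} {L : ℕ}
    (h : ∀ ℓ, ¬AccPt x (𝓟 (s ℓ))) (hU : U ∈ 𝓝 x) (hdisj : ∀ ℓ ≥ L, Disjoint U (s ℓ)) :
    ¬AccPt x (𝓟 (⋃ ℓ, s ℓ)) := by
  intro hacc
  have hsub : U ∩ ⋃ ℓ, s ℓ ⊆ ⋃ ℓ ∈ Iio L, s ℓ := by
    rintro y ⟨hyU, hy⟩
    obtain ⟨ℓ, hyℓ⟩ := mem_iUnion.1 hy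
    have hℓ : ℓ < L := not_le.1 fun hℓ => disjoint_left.1 (hdisj ℓ hℓ) hyU hyℓ
    exact mem_biUnion hℓ hyℓ
  exact not_accPt_biUnion_of_finite (finite_Iio L) (fun ℓ _ => h ℓ)
    ((hacc.nhds_inter hU).mono (principal_mono.2 hsub))

end AccPt

theorem ne_zero_of_norm_div_sub_one_lt_one {𝕜 : Type*} [NormedDivisionRing 𝕜] {z w : 𝕜}
    (h : ‖z / w - 1‖ < 1) : z ≠ 0 := by
  rintro rfl
  simp at h

theorem stmt_15_general (φ : ℕ → ℝ → ℂ)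
    (hzeros : ∀ ℓ : ℕ, ∀ x ∈ Set.Ioi (0 : ℝ),
      ¬ AccPt x (Filter.principal {r : ℝ | 0 < r ∧ φ ℓ r = 0}))
    (hunif : ∀ R0 > (0 : ℝ), ∀ e > (0 : ℝ), ∃ L : ℕ, ∀ ℓ ≥ L,
      ∀ r : ℝ, 0 < r → r ≤ R0 → ‖φ ℓ r / ((r ^ (ℓ + 1) : ℝ) : ℂ) - 1‖ < e) :
    ∀ x ∈ Set.Ioi (0 : ℝ),
      ¬ AccPt x (Filter.principal {r : ℝ | 0 < r ∧ ∃ ℓ : ℕ, φ ℓ r = 0}) := by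
  intro x hx
  obtain ⟨L, hL⟩ := hunif (x + 1) (by linarith [mem_Ioi.1 hx]) 1 one_pos
  have hunion : {r : ℝ | 0 < r ∧ ∃ ℓ : ℕ, φ ℓ r = 0} = ⋃ ℓ, {r : ℝ | 0 < r ∧ φ ℓ r = 0} := by
    ext r
    simp
  rw [hunion]
  refine not_accPt_iUnion_of_eventually_disjoint (L := L) (fun ℓ => hzeros ℓ x hx)
    (Iio_mem_nhds (lt_add_one x)) fun ℓ hℓ => disjoint_left.2 ?_
  rintro r hrx ⟨hr, hφ⟩
  exact ne_zero_of_norm_div_sub_one_lt_one (hL ℓ hℓ r hr hrx.le) hφ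

/-- Abstract form of the second assertion of Lemma 3.6: if each `φ_ℓ` is continuous on
`(0,∞)` with zero set having no accumulation point in `(0,∞)`, and
`sup_{0 < r ≤ R0} |r^{−ℓ−1} φ_ℓ(r) − 1| → 0` as `ℓ → ∞` for every `R0 > 0`, then the set
`Σ = { r > 0 : φ_ℓ(r) = 0 for some ℓ }` has no accumulation point in `(0,∞)`. -/
theorem stmt_15 (φ : ℕ → ℝ → ℂ)
    (hcont : ∀ ℓ : ℕ, ContinuousOn (φ ℓ) (Set.Ioi 0))
    (hzeros : ∀ ℓ : ℕ, ∀ x ∈ Set.Ioi (0 : ℝ),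
      ¬ AccPt x (Filter.principal {r : ℝ | 0 < r ∧ φ ℓ r = 0}))
    (hunif : ∀ R0 > (0 : ℝ), ∀ e > (0 : ℝ), ∃ L : ℕ, ∀ ℓ ≥ L,
      ∀ r : ℝ, 0 < r → r ≤ R0 → ‖φ ℓ r / ((r ^ (ℓ + 1) : ℝ) : ℂ) - 1‖ < e) :
    ∀ x ∈ Set.Ioi (0 : ℝ),
      ¬ AccPt x (Filter.principal {r : ℝ | 0 < r ∧ ∃ ℓ : ℕ, φ ℓ r = 0}) :=
  stmt_15_general φ hzeros hunif
end
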